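/- arXiv:math/0510301 — 4 statements merged into one kernel-verified Lean document; each statement's English description precedes it below -/
import Mathlib

section
/- Let m_0, m_1, ..., m_n be pairwise coprime integers ≥ 2. The diagonal action of the principal congruence subgroup Γ(m_0) ⊆ SL(2,ℤ) on the finite product ∏_{j=1}^n SL(2,ℤ)/Γ(m_j) of coset spaces is transitive. -/
open Matrix CongruenceSubgroup
open scoped MatrixGroups

/-- Coprimality lift: if `gcd(gcd(z,d),N) = 1` and `z ≠ 0`, we can shift `d` by a multiple
of `N` to make it coprime to `z`. -/
lemma aux_exists_coprime_shift (z d N : ℕ) (hz : z ≠ 0)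
    (hg : Nat.gcd (Nat.gcd z d) N = 1) : ∃ t, Nat.Coprime z (d + N * t) := by
  classical
  refine ⟨∏ p ∈ z.primeFactors.filter (fun p => ¬ p ∣ d), p, ?_⟩
  set t := ∏ p ∈ z.primeFactors.filter (fun p => ¬ p ∣ d), p with ht
  rw [Nat.Coprime]
  by_contra h
  obtain ⟨p, pp, hpg⟩ := Nat.exists_prime_and_dvd h
  have hpz : p ∣ z := hpg.trans (Nat.gcd_dvd_left _ _)
  have hpw : p ∣ d + N * t := hpg.trans (Nat.gcd_dvd_right _ _)
  by_cases hpd : p ∣ d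
  · -- then p ∣ N * t, and p ∤ t, so p ∣ N, contradicting hg
    have hNt : p ∣ N * t := by
      have := Nat.dvd_sub hpw hpd
      simpa using this
    have hpt : ¬ p ∣ t := by
      intro hpt
      obtain ⟨q, hq, hpq⟩ := (Nat.Prime.prime pp).exists_mem_finset_dvd hpt
      simp only [Finset.mem_filter] at hq
      have : p = q := (Nat.prime_dvd_prime_iff_eq pp (Nat.prime_of_mem_primeFactors hq.1)).mp hpq
      exact hq.2 (this ▸ hpd)
    have hpN : p ∣ N := ((Nat.Prime.dvd_mul pp).mp hNt).resolve_right hpt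
    have : p ∣ 1 := hg ▸ Nat.dvd_gcd (Nat.dvd_gcd hpz hpd) hpN
    exact pp.one_lt.ne' (Nat.dvd_one.mp this)
  · -- then p ∣ t, so p ∣ N * t, so p ∣ d, contradiction
    have hmem : p ∈ z.primeFactors.filter (fun p => ¬ p ∣ d) := by
      simp only [Finset.mem_filter, Nat.mem_primeFactors]
      exact ⟨⟨pp, hpz, hz⟩, hpd⟩
    have hpt : p ∣ t := Finset.dvd_prod_of_mem _ hmem
    have : p ∣ d := by
      have := Nat.dvd_sub hpw (hpt.mul_left N)
      simpa using this
    exact hpd this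

/-- Surjectivity of the reduction map `SL(2, ℤ) → SL(2, ZMod N)`. -/
lemma aux_SL2_lift (N : ℕ) [NeZero N] (B : SL(2, ZMod N)) :
    ∃ γ : SL(2, ℤ), Matrix.SpecialLinearGroup.map (Int.castRingHom (ZMod N)) γ = B := by
  have hN : (N : ℕ) ≠ 0 := NeZero.ne N
  -- integer lifts of the entries of B
  set A : Matrix (Fin 2) (Fin 2) ℤ := fun i j => (((B : Matrix (Fin 2) (Fin 2) (ZMod N)) i j).val : ℤ) with hA
  have hAcast : ∀ i j, ((A i j : ℤ) : ZMod N) = (B : Matrix (Fin 2) (Fin 2) (ZMod N)) i j := by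
    intro i j
    simp [hA, ZMod.natCast_val, ZMod.cast_id]
  have hdetA : ((A.det : ℤ) : ZMod N) = 1 := by
    have hmap : A.map (Int.castRingHom (ZMod N)) = (B : Matrix (Fin 2) (Fin 2) (ZMod N)) := by
      ext i j; simpa using hAcast i j
    have hmd := RingHom.map_det (Int.castRingHom (ZMod N)) A
    rw [RingHom.mapMatrix_apply] at hmd
    calc ((A.det : ℤ) : ZMod N) = (A.map (Int.castRingHom (ZMod N))).det := hmd
    _ = 1 := by rw [hmap]; exact B.2
  have hNdvd_det : (N : ℤ) ∣ A.det - 1 := by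
    have : ((A.det - 1 : ℤ) : ZMod N) = 0 := by rw [Int.cast_sub, Int.cast_one, hdetA, sub_self]
    exact (ZMod.intCast_zmod_eq_zero_iff_dvd _ _).mp this
  -- natural number bottom-row data
  set cN : ℕ := ((B : Matrix (Fin 2) (Fin 2) (ZMod N)) 1 0).val with hcN
  set dN : ℕ := ((B : Matrix (Fin 2) (Fin 2) (ZMod N)) 1 1).val with hdN
  set z0 : ℕ := if cN = 0 then N else cN with hz0
  have hz0ne : z0 ≠ 0 := by
    rw [hz0]; split <;> simp_all
  have hz0cast : ((z0 : ℕ) : ZMod N) = (B : Matrix (Fin 2) (Fin 2) (ZMod N)) 1 0 := by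
    rw [hz0]
    split
    · rename_i h
      rw [ZMod.natCast_self]
      have : (B : Matrix (Fin 2) (Fin 2) (ZMod N)) 1 0 = ((cN : ℕ) : ZMod N) := by
        simp [hcN, ZMod.natCast_val, ZMod.cast_id]
      rw [this, h]; simp
    · simp [hcN, ZMod.natCast_val, ZMod.cast_id]
  have hdNcast : ((dN : ℕ) : ZMod N) = (B : Matrix (Fin 2) (Fin 2) (ZMod N)) 1 1 := by
    simp [hdN, ZMod.natCast_val, ZMod.cast_id]
  -- gcd(gcd(z0, dN), N) = 1
  have hgcd : Nat.gcd (Nat.gcd z0 dN) N = 1 := by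
    set g : ℕ := Nat.gcd (Nat.gcd z0 dN) N with hgdef
    have hgN : g ∣ N := Nat.gcd_dvd_right _ _
    have hgz : g ∣ z0 := (Nat.gcd_dvd_left _ _).trans (Nat.gcd_dvd_left _ _)
    have hgd : g ∣ dN := (Nat.gcd_dvd_left _ _).trans (Nat.gcd_dvd_right _ _)
    have hgc : g ∣ cN := by
      rw [hz0] at hgz
      by_cases h : cN = 0
      · simp [h]
      · simpa [h] using hgz
    -- pass to ℤ
    have h10 : (g : ℤ) ∣ A 1 0 := by
      have : A 1 0 = (cN : ℤ) := by simp [hA, hcN]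
      rw [this]; exact_mod_cast Int.natCast_dvd_natCast.mpr hgc
    have h11 : (g : ℤ) ∣ A 1 1 := by
      have : A 1 1 = (dN : ℤ) := by simp [hA, hdN]
      rw [this]; exact_mod_cast Int.natCast_dvd_natCast.mpr hgd
    have hdvddet : (g : ℤ) ∣ A.det := by
      rw [Matrix.det_fin_two]
      exact dvd_sub (Dvd.dvd.mul_left h11 _) (Dvd.dvd.mul_left h10 _)
    have h1 : (g : ℤ) ∣ 1 := by
      have h2' : (g : ℤ) ∣ A.det - 1 := (Int.natCast_dvd_natCast.mpr hgN).trans hNdvd_det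
      simpa using dvd_sub hdvddet h2'
    exact Nat.dvd_one.mp (by exact_mod_cast h1)
  -- make the bottom row coprime
  obtain ⟨t, hcopzw⟩ := aux_exists_coprime_shift z0 dN N hz0ne hgcd
  set w0 : ℕ := dN + N * t with hw0
  have hw0cast : ((w0 : ℕ) : ZMod N) = (B : Matrix (Fin 2) (Fin 2) (ZMod N)) 1 1 := by
    rw [hw0]; push_cast; simp [hdNcast]
  obtain ⟨u, v, huv⟩ := (Nat.isCoprime_iff_coprime.mpr hcopzw : IsCoprime (z0 : ℤ) (w0 : ℤ))
  set z : ℤ := (z0 : ℤ) with hz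
  set w : ℤ := (w0 : ℤ) with hw
  set a : ℤ := A 0 0 with ha
  set b : ℤ := A 0 1 with hb
  have hacast : ((a : ℤ) : ZMod N) = (B : Matrix (Fin 2) (Fin 2) (ZMod N)) 0 0 := hAcast 0 0
  have hbcast : ((b : ℤ) : ZMod N) = (B : Matrix (Fin 2) (Fin 2) (ZMod N)) 0 1 := hAcast 0 1
  have hzcast : ((z : ℤ) : ZMod N) = (B : Matrix (Fin 2) (Fin 2) (ZMod N)) 1 0 := by
    rw [hz]; push_cast [hz0cast]; rfl
  have hwcast : ((w : ℤ) : ZMod N) = (B : Matrix (Fin 2) (Fin 2) (ZMod N)) 1 1 := by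
    rw [hw]; push_cast [hw0cast]; rfl
  -- key divisibility
  have hkey : (N : ℤ) ∣ ((a - v) * w - (b - (-u)) * z) := by
    rw [← ZMod.intCast_zmod_eq_zero_iff_dvd]
    push_cast
    rw [hacast, hbcast, hzcast, hwcast]
    have hz' : ((z : ℤ) : ZMod N) = (B : Matrix (Fin 2) (Fin 2) (ZMod N)) 1 0 := hzcast
    have huv' : ((u * z + v * w : ℤ) : ZMod N) = 1 := by rw [huv]; simp
    push_cast at huv'
    rw [hzcast, hwcast] at huv'
    have hdetB : (B : Matrix (Fin 2) (Fin 2) (ZMod N)).det = 1 := B.2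
    rw [Matrix.det_fin_two] at hdetB
    linear_combination hdetB - huv'
  obtain ⟨k, hk⟩ := hkey
  set s : ℤ := (a - v) * u + (b - (-u)) * v with hs
  have e1 : v + s * z = a - v * ((N : ℤ) * k) := by
    rw [hs]; linear_combination (a - v) * huv - v * hk
  have e2 : (-u) + s * w = b + u * ((N : ℤ) * k) := by
    rw [hs]; linear_combination (b - (-u)) * huv + u * hk
  have hdet1 : (!![v + s * z, -u + s * w; z, w] : Matrix (Fin 2) (Fin 2) ℤ).det = 1 := by
    rw [Matrix.det_fin_two_of]; linear_combination huv
  refine ⟨⟨!![v + s * z, -u + s * w; z, w], hdet1⟩, ?_⟩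
  apply Subtype.ext
  ext i j
  have : ∀ i j, ((Matrix.SpecialLinearGroup.map (Int.castRingHom (ZMod N))
      (⟨!![v + s * z, -u + s * w; z, w], hdet1⟩ : SL(2, ℤ)) : Matrix (Fin 2) (Fin 2) (ZMod N)) i j)
      = ((!![v + s * z, -u + s * w; z, w] : Matrix (Fin 2) (Fin 2) ℤ) i j : ZMod N) := fun _ _ => rfl
  rw [this i j]
  fin_cases i <;> fin_cases j <;>
    simp only [Matrix.cons_val', Matrix.cons_val_zero, Matrix.cons_val_one, Matrix.head_cons,
      Matrix.empty_val', Matrix.cons_val_fin_one, Matrix.head_fin_const, Fin.isValue]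
  · rw [e1]; push_cast; simp [hacast]
  · rw [e2]; push_cast; simp [hbcast]
  · exact hzcast
  · exact hwcast

/-- For pairwise coprime integers `m 0, m 1, ..., m n` (all `≥ 2`), the diagonal action of
`Γ(m 0)` on the product of coset spaces `∏_{j=1}^n SL(2, ℤ) / Γ(m j)` is transitive. -/
theorem stmt_2 (n : ℕ) (m : Fin (n + 1) → ℕ) (h2 : ∀ i, 2 ≤ m i)
    (hcop : ∀ i j, i ≠ j → Nat.Coprime (m i) (m j))
    (x y : ∀ j : Fin n, SL(2, ℤ) ⧸ Gamma (m j.succ)) :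
    ∃ γ ∈ Gamma (m 0), ∀ j : Fin n, (γ : SL(2, ℤ)) • x j = y j := by
  classical
  have hpw : Pairwise (Function.onFun Nat.Coprime m) := fun i j hij => hcop i j hij
  have hMpos : 0 < ∏ i, m i :=
    Finset.prod_pos (fun i _ => lt_of_lt_of_le (by norm_num) (h2 i))
  haveI : NeZero (∏ i, m i) := ⟨hMpos.ne'⟩
  have hdvd : ∀ k, m k ∣ ∏ i, m i := fun k => Finset.dvd_prod_of_mem m (Finset.mem_univ k)
  set φ := ZMod.prodEquivPi m hpw with hφ
  set X : ∀ _ : Fin n, SL(2, ℤ) := fun j => (x j).out with hX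
  set Y : ∀ _ : Fin n, SL(2, ℤ) := fun j => (y j).out with hY
  set target : ∀ k : Fin (n+1), SL(2, ZMod (m k)) :=
    fun k => Fin.cases 1 (fun j => Matrix.SpecialLinearGroup.map
      (Int.castRingHom (ZMod (m j.succ))) (Y j * (X j)⁻¹)) k with htarget
  set E : Matrix (Fin 2) (Fin 2) (ZMod (∏ i, m i)) :=
    fun i j => φ.symm (fun k => ((target k : Matrix (Fin 2) (Fin 2) (ZMod (m k))) i j)) with hE
  have hφE : ∀ k i j, φ (E i j) k = (target k : Matrix (Fin 2) (Fin 2) (ZMod (m k))) i j := by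
    intro k i j
    rw [hE]
    simp
  have hEk : ∀ k i j, ZMod.castHom (hdvd k) (ZMod (m k)) (E i j)
      = (target k : Matrix (Fin 2) (Fin 2) (ZMod (m k))) i j := by
    intro k i j
    have hcomp : ZMod.castHom (hdvd k) (ZMod (m k))
        = (Pi.evalRingHom (fun k => ZMod (m k)) k).comp
          (φ : ZMod (∏ i, m i) →+* Π k, ZMod (m k)) :=
      RingHom.ext_zmod _ _
    rw [hcomp]
    simpa using hφE k i j
  have hdetE : E.det = 1 := by
    apply φ.injective
    rw [_root_.map_one]
    have hmd := RingHom.map_det (φ : ZMod (∏ i, m i) →+* Π k, ZMod (m k)) E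
    rw [RingHom.mapMatrix_apply] at hmd
    have hmd' : φ E.det = (E.map (φ : ZMod (∏ i, m i) →+* Π k, ZMod (m k))).det := hmd
    rw [hmd']
    funext k
    have hmd2 := RingHom.map_det (Pi.evalRingHom (fun k => ZMod (m k)) k)
      (E.map (φ : ZMod (∏ i, m i) →+* Π k, ZMod (m k)))
    rw [RingHom.mapMatrix_apply] at hmd2
    have heq : (E.map (φ : ZMod (∏ i, m i) →+* Π k, ZMod (m k))).map
        (Pi.evalRingHom (fun k => ZMod (m k)) k)
        = (target k : Matrix (Fin 2) (Fin 2) (ZMod (m k))) := by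
      ext i j
      simp only [Matrix.map_apply, Pi.evalRingHom_apply, RingHom.coe_coe]
      exact hφE k i j
    calc ((E.map (φ : ZMod (∏ i, m i) →+* Π k, ZMod (m k))).det) k
        = ((E.map (φ : ZMod (∏ i, m i) →+* Π k, ZMod (m k))).map
          (Pi.evalRingHom (fun k => ZMod (m k)) k)).det := hmd2
    _ = 1 := by rw [heq]; exact (target k).2
  obtain ⟨γ, hγ⟩ := aux_SL2_lift (∏ i, m i) ⟨E, hdetE⟩
  have hγk : ∀ k, Matrix.SpecialLinearGroup.map (Int.castRingHom (ZMod (m k))) γ = target k := by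
    intro k
    apply Subtype.ext
    ext i j
    have h1 : ((γ i j : ℤ) : ZMod (∏ i, m i)) = E i j := by
      have := congrArg (fun g : SL(2, ZMod (∏ i, m i)) => (g : Matrix (Fin 2) (Fin 2) (ZMod (∏ i, m i))) i j) hγ
      simpa using this
    have h2' : ((γ i j : ℤ) : ZMod (m k))
        = ZMod.castHom (hdvd k) (ZMod (m k)) ((γ i j : ℤ) : ZMod (∏ i, m i)) :=
      (map_intCast (ZMod.castHom (hdvd k) (ZMod (m k))) _).symm
    show ((γ i j : ℤ) : ZMod (m k)) = _
    rw [h2', h1, hEk]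
  refine ⟨γ, ?_, ?_⟩
  · rw [Gamma_mem']
    have h0 := hγk 0
    rw [htarget] at h0
    simpa using h0
  · intro j
    have hj := hγk j.succ
    rw [htarget] at hj
    simp only [Fin.cases_succ] at hj
    have hx : QuotientGroup.mk (X j) = x j := QuotientGroup.out_eq' _
    have hy : QuotientGroup.mk (Y j) = y j := QuotientGroup.out_eq' _
    rw [← hx, ← hy, MulAction.Quotient.smul_mk, QuotientGroup.eq, Gamma_mem']
    simp only [smul_eq_mul, _root_.mul_inv_rev, _root_.map_mul, _root_.map_inv, hj]
    group
end

section
/- Let (m_j)_{j≥1} be pairwise coprime integers ≥ 2 and let m_0 be coprime to all m_j. Then the image of Γ(m_0) under the diagonal embedding into the profinite product group G = ∏_{j≥1} SL(2,ℤ/m_jℤ) is dense. -/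
open Matrix CongruenceSubgroup

lemma aux_coprime_lift (c d n : ℤ) (hd : d ≠ 0) (h : ∃ u v w, u*c + v*d + w*n = 1) :
    ∃ t : ℤ, IsCoprime (c + t*n) d := by
  obtain ⟨u, v, w, huvw⟩ := h
  set T : ℕ := (d.natAbs.primeFactors.filter (fun p => ¬ p ∣ c.natAbs)).prod id with hT
  refine ⟨(T : ℤ), Int.isCoprime_iff_gcd_eq_one.mpr ?_⟩
  apply Nat.coprime_of_dvd
  intro p pp hp1 hp2
  replace hp1 : (p:ℤ) ∣ c + (T:ℤ) * n := Int.natCast_dvd.mpr hp1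
  replace hp2 : (p:ℤ) ∣ d := Int.natCast_dvd.mpr hp2
  by_cases hpc : (p:ℤ) ∣ c
  · have hpt : ¬ (p:ℤ) ∣ (T:ℤ) := by
      rw [Int.natCast_dvd_natCast]
      intro hdvd
      obtain ⟨q, hq, hpq⟩ := (Nat.Prime.prime pp).dvd_finset_prod_iff id |>.mp hdvd
      rw [Finset.mem_filter] at hq
      rw [(Nat.prime_dvd_prime_iff_eq pp (Nat.mem_primeFactors.mp hq.1).1).mp hpq] at hpc
      exact hq.2 (Int.natCast_dvd.mp hpc)
    have hpn : ¬ (p:ℤ) ∣ n := by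
      intro hpn
      have h1 : (p:ℤ) ∣ 1 := huvw ▸ dvd_add (dvd_add (hpc.mul_left u) (hp2.mul_left v)) (hpn.mul_left w)
      exact pp.one_lt.ne' (Nat.eq_one_of_dvd_one (show p ∣ 1 by exact_mod_cast h1))
    have : (p:ℤ) ∣ (T:ℤ) * n := (dvd_add_right hpc).mp hp1
    rcases ((Int.Prime.dvd_mul' pp this)) with h | h
    · exact hpt h
    · exact hpn h
  · have hpt : (p:ℤ) ∣ (T:ℤ) := by
      rw [Int.natCast_dvd_natCast, hT]
      exact Finset.dvd_prod_of_mem id (Finset.mem_filter.mpr ⟨Nat.mem_primeFactors.mpr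
        ⟨pp, Int.natAbs_dvd_natAbs.mpr hp2, Int.natAbs_ne_zero.mpr hd⟩,
        fun hc => hpc (Int.natCast_dvd.mpr hc)⟩)
    exact hpc ((dvd_add_right (hpt.mul_right n)).mp (add_comm c _ ▸ hp1))

lemma SL2_lift (N : ℕ) [NeZero N] (A : Matrix.SpecialLinearGroup (Fin 2) (ZMod N)) :
    ∃ γ : Matrix.SpecialLinearGroup (Fin 2) ℤ,
      Matrix.SpecialLinearGroup.map (Int.castRingHom (ZMod N)) γ = A := by
  set a : ℤ := ((A.1 0 0).val : ℤ) with ha0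
  set b : ℤ := ((A.1 0 1).val : ℤ) with hb0
  set c : ℤ := ((A.1 1 0).val : ℤ) with hc0
  set d : ℤ := ((A.1 1 1).val : ℤ) with hd0
  have ha : ((a : ℤ) : ZMod N) = A.1 0 0 := by push_cast [ha0]; simp [ZMod.natCast_val]
  have hb : ((b : ℤ) : ZMod N) = A.1 0 1 := by push_cast [hb0]; simp [ZMod.natCast_val]
  have hc : ((c : ℤ) : ZMod N) = A.1 1 0 := by push_cast [hc0]; simp [ZMod.natCast_val]
  have hd : ((d : ℤ) : ZMod N) = A.1 1 1 := by push_cast [hd0]; simp [ZMod.natCast_val]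
  have hdetA : A.1 0 0 * A.1 1 1 - A.1 0 1 * A.1 1 0 = 1 := by
    rw [← Matrix.det_fin_two]; exact A.2
  obtain ⟨k, hk⟩ : (N:ℤ) ∣ a*d - b*c - 1 := by
    rw [← ZMod.intCast_zmod_eq_zero_iff_dvd]
    push_cast
    rw [ha, hb, hc, hd]
    linear_combination hdetA
  set ε : ℤ := if d = 0 then 1 else 0 with hε
  set d₁ : ℤ := d + ε * N with hd₁def
  have hd₁ne : d₁ ≠ 0 := by
    rw [hd₁def, hε]
    split_ifs with h0
    · simp [h0]; exact_mod_cast (NeZero.ne N)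
    · simpa [h0] using h0
  have hbez : ∃ u v w, u*c + v*d₁ + w*(N:ℤ) = 1 :=
    ⟨-b, a, -(k + a*ε), by rw [hd₁def]; linear_combination hk⟩
  obtain ⟨t, hco⟩ := aux_coprime_lift c d₁ N hd₁ne hbez
  set c' : ℤ := c + t*N with hc'def
  obtain ⟨x, y, hxy⟩ := hco
  have hc' : ((c' : ℤ) : ZMod N) = A.1 1 0 := by
    rw [hc'def]; push_cast; simp [ZMod.natCast_self, hc]
  have hd₁ : ((d₁ : ℤ) : ZMod N) = A.1 1 1 := by
    rw [hd₁def]; push_cast; simp [ZMod.natCast_self, hd]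
  set X : ZMod N := ((x : ℤ) : ZMod N) with hX
  set Y : ZMod N := ((y : ℤ) : ZMod N) with hY
  have H1 : X * A.1 1 0 + Y * A.1 1 1 = 1 := by
    rw [hX, hY, ← hc', ← hd₁]
    exact_mod_cast congrArg (Int.cast : ℤ → ZMod N) hxy
  set s : ZMod N := (A.1 0 0 - Y) * X + (A.1 0 1 + X) * Y with hs
  set s' : ℤ := (s.val : ℤ) with hs'
  have hs'' : ((s' : ℤ) : ZMod N) = s := by push_cast [hs']; simp [ZMod.natCast_val]
  refine ⟨⟨!![y + s'*c', -x + s'*d₁; c', d₁], by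
    rw [Matrix.det_fin_two_of]; linear_combination hxy⟩, ?_⟩
  apply Subtype.ext
  ext i j
  have hmap : ∀ (M : Matrix.SpecialLinearGroup (Fin 2) ℤ) (i j : Fin 2),
      ((Matrix.SpecialLinearGroup.map (Int.castRingHom (ZMod N)) M :
        Matrix (Fin 2) (Fin 2) (ZMod N)) i j) = ((M.1 i j : ℤ) : ZMod N) := fun M i j => rfl
  refine (hmap _ i j).trans ?_
  fin_cases i <;> fin_cases j <;>
    simp only [Matrix.cons_val', Matrix.cons_val_zero, Matrix.cons_val_one, Matrix.head_cons,
      Matrix.head_fin_const, Matrix.empty_val', Matrix.cons_val_fin_one, Matrix.of_apply]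
  · show ((y + s'*c' : ℤ) : ZMod N) = A.1 0 0
    push_cast
    rw [hs'', hc', ← hY, hs]
    linear_combination A.1 0 0 * H1 - Y * hdetA
  · show ((-x + s'*d₁ : ℤ) : ZMod N) = A.1 0 1
    push_cast
    rw [hs'', hd₁, ← hX, hs]
    linear_combination A.1 0 1 * H1 + X * hdetA
  · exact hc'
  · exact hd₁

lemma Gamma_le_of_dvd (d M : ℕ) (h : d ∣ M) : Gamma M ≤ Gamma d := by
  intro γ hγ
  rw [Gamma_mem] at hγ ⊢
  have key : ∀ z : ℤ, (z : ZMod d) = (ZMod.castHom h (ZMod d)) ((z : ZMod M)) := fun z =>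
    (RingHom.congr_fun (RingHom.ext_int ((ZMod.castHom h (ZMod d)).comp
      (Int.castRingHom (ZMod M))) (Int.castRingHom (ZMod d))) z).symm
  refine ⟨?_, ?_, ?_, ?_⟩ <;> rw [key] <;>
    simp [hγ.1, hγ.2.1, hγ.2.2.1, hγ.2.2.2, ZMod.cast_one h]

lemma lift_gamma (M n : ℕ) (hM : M ≠ 0) (hn : n ≠ 0) (h : Nat.Coprime M n)
    (A : Matrix.SpecialLinearGroup (Fin 2) (ZMod n)) :
    ∃ γ ∈ Gamma M, Matrix.SpecialLinearGroup.map (Int.castRingHom (ZMod n)) γ = A := by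
  haveI : NeZero (M*n) := ⟨mul_ne_zero hM hn⟩
  set e := ZMod.chineseRemainder h with he
  set W : Matrix (Fin 2) (Fin 2) (ZMod (M*n)) :=
    Matrix.of fun i j => e.symm ((1 : Matrix (Fin 2) (Fin 2) (ZMod M)) i j, A.1 i j) with hW
  have hWe : ∀ i j, e (W i j) = ((1 : Matrix (Fin 2) (Fin 2) (ZMod M)) i j, A.1 i j) :=
    fun i j => e.apply_symm_apply _
  have hdetA : A.1 0 0 * A.1 1 1 - A.1 0 1 * A.1 1 0 = 1 := by
    rw [← Matrix.det_fin_two]; exact A.2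
  have hdet : W.det = 1 := by
    apply e.injective
    rw [_root_.map_one e, Matrix.det_fin_two, map_sub, _root_.map_mul e, _root_.map_mul e,
      hWe, hWe, hWe, hWe]
    simp [Matrix.one_apply, Prod.ext_iff, hdetA]
  obtain ⟨γ, hγ⟩ := SL2_lift (M*n) ⟨W, hdet⟩
  have hγW : ∀ i j, ((γ.1 i j : ℤ) : ZMod (M*n)) = W i j := by
    intro i j
    exact congrFun (congrFun (congrArg Subtype.val hγ) i) j
  have hfst : ∀ z : ℤ, (e ((z : ZMod (M*n)))).1 = (z : ZMod M) := by
    intro z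
    simpa using RingHom.congr_fun (RingHom.ext_int
      ((RingHom.fst (ZMod M) (ZMod n)).comp ((e : ZMod (M*n) →+* ZMod M × ZMod n).comp
        (Int.castRingHom (ZMod (M*n))))) (Int.castRingHom (ZMod M))) z
  have hsnd : ∀ z : ℤ, (e ((z : ZMod (M*n)))).2 = (z : ZMod n) := by
    intro z
    simpa using RingHom.congr_fun (RingHom.ext_int
      ((RingHom.snd (ZMod M) (ZMod n)).comp ((e : ZMod (M*n) →+* ZMod M × ZMod n).comp
        (Int.castRingHom (ZMod (M*n))))) (Int.castRingHom (ZMod n))) z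
  refine ⟨γ, ?_, ?_⟩
  · have key : ∀ i j : Fin 2, ((γ.1 i j : ℤ) : ZMod M)
        = (1 : Matrix (Fin 2) (Fin 2) (ZMod M)) i j := by
      intro i j; rw [← hfst, hγW, hWe]
    rw [Gamma_mem]
    exact ⟨(key 0 0).trans (by simp [Matrix.one_apply]),
      (key 0 1).trans (by simp [Matrix.one_apply]),
      (key 1 0).trans (by simp [Matrix.one_apply]),
      (key 1 1).trans (by simp [Matrix.one_apply])⟩
  · apply Subtype.ext
    ext i j
    show ((γ.1 i j : ℤ) : ZMod n) = A.1 i j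
    rw [← hsnd, hγW, hWe]

lemma key_finset (m : ℕ → ℕ) (h2 : ∀ j, 1 ≤ j → 2 ≤ m j)
    (hcop : ∀ i j, i ≠ j → Nat.Coprime (m i) (m j)) (I : Finset {j : ℕ // 1 ≤ j})
    (x : ∀ j : {j : ℕ // 1 ≤ j}, Matrix.SpecialLinearGroup (Fin 2) (ZMod (m j.1))) :
    ∃ γ ∈ Gamma (m 0), ∀ i ∈ I,
      Matrix.SpecialLinearGroup.map (Int.castRingHom (ZMod (m i.1))) γ = x i := by
  have hm0 : m 0 ≠ 0 := by
    intro h0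
    have := hcop 0 1 (by norm_num)
    rw [h0, Nat.coprime_zero_left] at this
    have := h2 1 le_rfl
    omega
  induction I using Finset.induction with
  | empty => exact ⟨1, Subgroup.one_mem _, by simp⟩
  | @insert a s ha ih =>
    obtain ⟨γ₀, hγ₀, hγ₀s⟩ := ih
    set M : ℕ := m 0 * ∏ i ∈ s, m i.1 with hM
    have hMne : M ≠ 0 := by
      rw [hM]
      exact mul_ne_zero hm0 (Finset.prod_ne_zero_iff.mpr fun i hi => by
        have := h2 i.1 i.2; omega)
    have hane : m a.1 ≠ 0 := by have := h2 a.1 a.2; omega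
    have hMcop : Nat.Coprime M (m a.1) := by
      rw [hM]
      refine Nat.Coprime.mul ?_ ?_
      · exact hcop 0 a.1 (by have := a.2; omega)
      · exact Nat.Coprime.prod_left fun i hi =>
          hcop i.1 a.1 (fun hh => ha (by rwa [show i = a from Subtype.ext hh] at hi))
    obtain ⟨δ, hδ, hδa⟩ := lift_gamma M (m a.1) hMne hane hMcop
      (x a * (Matrix.SpecialLinearGroup.map (Int.castRingHom (ZMod (m a.1))) γ₀)⁻¹)
    refine ⟨δ * γ₀, Subgroup.mul_mem _
      (Gamma_le_of_dvd _ _ (hM ▸ dvd_mul_right _ _) hδ) hγ₀, ?_⟩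
    intro i hi
    rcases Finset.mem_insert.mp hi with rfl | his
    · rw [_root_.map_mul, hδa, inv_mul_cancel_right]
    · rw [_root_.map_mul, hγ₀s i his]
      have hdvd : m i.1 ∣ M := hM ▸ dvd_mul_of_dvd_right (Finset.dvd_prod_of_mem _ his) _
      have : δ ∈ Gamma (m i.1) := Gamma_le_of_dvd _ _ hdvd hδ
      rw [Gamma_mem'.mp this, one_mul]

/-- For pairwise coprime integers `m j ≥ 2` (for `j ≥ 1`) and `m 0` coprime to all of them,
the image of `Γ(m 0)` under the diagonal embedding into the compact product group
`∏_{j≥1} SL(2, ℤ/m_jℤ)` (each factor finite discrete) is dense. -/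
theorem stmt_5 (m : ℕ → ℕ) (h2 : ∀ j, 1 ≤ j → 2 ≤ m j)
    (hcop : ∀ i j, i ≠ j → Nat.Coprime (m i) (m j)) :
    letI : ∀ j : ℕ, TopologicalSpace (Matrix.SpecialLinearGroup (Fin 2) (ZMod (m j))) :=
      fun _ => ⊥
    Dense {x : ∀ j : {j : ℕ // 1 ≤ j}, Matrix.SpecialLinearGroup (Fin 2) (ZMod (m j.1)) |
      ∃ γ ∈ Gamma (m 0), ∀ j : {j : ℕ // 1 ≤ j},
        x j = Matrix.SpecialLinearGroup.map (Int.castRingHom (ZMod (m j.1))) γ} := by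
  letI : ∀ j : ℕ, TopologicalSpace (Matrix.SpecialLinearGroup (Fin 2) (ZMod (m j))) :=
    fun _ => ⊥
  rw [dense_iff_inter_open]
  rintro U hU ⟨x0, hx0⟩
  obtain ⟨I, u, h1, hsub⟩ := isOpen_pi_iff.mp hU x0 hx0
  obtain ⟨γ, hγ, hγI⟩ := key_finset m h2 hcop I x0
  refine ⟨fun j => Matrix.SpecialLinearGroup.map (Int.castRingHom (ZMod (m j.1))) γ,
    hsub fun i hi => ?_, γ, hγ, fun j => rfl⟩
  show Matrix.SpecialLinearGroup.map (Int.castRingHom (ZMod (m i.1))) γ ∈ u i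
  rw [hγI i hi]
  exact (h1 i hi).2
end

section
/- Let G be a compact topological group, H a Hilbert space, g ↦ α_g a strongly continuous unitary representation of G on H, and S a finite-rank bounded operator on H. Then the operator T = ∫_G α_g S α_{g⁻¹} dg (integral with respect to normalized Haar measure, defined weakly) is a compact operator. -/
/-! For `ξ` in the unit ball, the integrand `g ↦ α g (S (α g⁻¹ ξ))` takes values in the image
of `G × closure (S '' closedBall 0 1)` under `(g, v) ↦ α g v`, which is compact: `S` has finite
rank, and the action is jointly continuous because every `α g` is an isometry. The weak integral
`T ξ` is the Bochner integral, i.e. `haar(G)` times an average of such values, so it lies in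
`haar(G) • closedConvexHull` of that compact set, again compact since `H` is complete. -/

open MeasureTheory Metric Set Filter Topology NNReal Pointwise

theorem IsCompact.closedConvexHull {E : Type*} [NormedAddCommGroup E] [NormedSpace ℝ E]
    [CompleteSpace E] {K : Set E} (hK : IsCompact K) : IsCompact (closedConvexHull ℝ K) := by
  rw [closedConvexHull_eq_closure_convexHull]
  exact (totallyBounded_convexHull.mpr hK.totallyBounded).closure.isCompact_of_isClosed
    isClosed_closure

theorem isCompactOperator_of_finiteDimensional_range {𝕜 E F : Type*} [RCLike 𝕜]
    [SeminormedAddCommGroup E] [NormedSpace 𝕜 E] [NormedAddCommGroup F] [NormedSpace 𝕜 F]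
    (S : E →L[𝕜] F) [FiniteDimensional 𝕜 (LinearMap.range (S : E →ₗ[𝕜] F))] :
    IsCompactOperator S :=
  (isCompactOperator_of_locallyCompactSpace_dom S.rangeRestrict).continuous_comp
    continuous_subtype_val

theorem continuous_apply_prod_of_nnnorm_le {G 𝕜 E F : Type*} [TopologicalSpace G]
    [NontriviallyNormedField 𝕜] [SeminormedAddCommGroup E] [NormedSpace 𝕜 E]
    [SeminormedAddCommGroup F] [NormedSpace 𝕜 F] (α : G → E →L[𝕜] F) (C : ℝ≥0)
    (hα : ∀ g, ‖α g‖₊ ≤ C) (hcont : ∀ ξ, Continuous fun g => α g ξ) :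
    Continuous fun p : G × E => α p.1 p.2 :=
  continuous_prod_of_continuous_lipschitzWith' _ C (fun g => (α g).lipschitz.weaken (hα g)) hcont

theorem eq_integral_of_forall_inner_eq {X 𝕜 E : Type*} [MeasurableSpace X] {μ : Measure X}
    [RCLike 𝕜] [NormedAddCommGroup E] [InnerProductSpace 𝕜 E] [CompleteSpace E] [NormedSpace ℝ E]
    {f : X → E} (hf : Integrable f μ) {x : E}
    (hx : ∀ η, inner 𝕜 x η = ∫ g, inner 𝕜 (f g) η ∂μ) : x = ∫ g, f g ∂μ := by
  refine ext_inner_right 𝕜 fun η => ?_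
  calc inner 𝕜 x η = ∫ g, starRingEnd 𝕜 (inner 𝕜 η (f g)) ∂μ := by simp_rw [hx, inner_conj_symm]
    _ = inner 𝕜 (∫ g, f g ∂μ) η := by rw [integral_conj, integral_inner hf, inner_conj_symm]

theorem isCompactOperator_of_integral_mem {X E F : Type*} [MeasurableSpace X] {μ : Measure X}
    [IsFiniteMeasure μ] [NeZero μ] [TopologicalSpace E] [Zero E]
    [NormedAddCommGroup F] [NormedSpace ℝ F] [CompleteSpace F]
    {T : E → F} {f : E → X → F} {U : Set E} (hU : U ∈ 𝓝 0) {K : Set F} (hK : IsCompact K)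
    (hfK : ∀ ξ ∈ U, ∀ g, f ξ g ∈ K) (hf : ∀ ξ, Integrable (f ξ) μ)
    (hT : ∀ ξ, T ξ = ∫ g, f ξ g ∂μ) : IsCompactOperator T := by
  refine ⟨μ.real univ • closedConvexHull ℝ K, hK.closedConvexHull.smul _,
    mem_of_superset hU fun ξ hξ => ?_⟩
  have havg : ⨍ g, f ξ g ∂μ ∈ closedConvexHull ℝ K :=
    convex_closedConvexHull.average_mem isClosed_closedConvexHull
      (ae_of_all _ fun g => subset_closedConvexHull (hfK ξ hξ g)) (hf ξ)
  rw [mem_preimage, hT, ← measure_smul_average]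
  exact smul_mem_smul_set havg

theorem stmt_6_general {G : Type*} [Group G] [TopologicalSpace G] [IsTopologicalGroup G]
    [CompactSpace G] [MeasurableSpace G] [BorelSpace G]
    {H : Type*} [NormedAddCommGroup H] [InnerProductSpace ℂ H] [CompleteSpace H]
    (α : G →* (H →L[ℂ] H))
    (hunit : ∀ (g : G) (ξ : H), ‖α g ξ‖ = ‖ξ‖)
    (hcont : ∀ ξ : H, Continuous fun g => α g ξ)
    (S : H →L[ℂ] H) (hS : FiniteDimensional ℂ (LinearMap.range (S : H →ₗ[ℂ] H)))
    (T : H →L[ℂ] H)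
    (hT : ∀ ξ η : H, (inner ℂ (T ξ) η : ℂ) =
      ∫ g, (inner ℂ (α g (S (α g⁻¹ ξ))) η : ℂ) ∂(Measure.haar : Measure G)) :
    IsCompactOperator T := by
  have hact : Continuous fun p : G × H => α p.1 p.2 :=
    continuous_apply_prod_of_nnnorm_le α 1
      (fun g => (α g).opNNNorm_le_bound 1 fun ξ => by
        rw [one_mul, ← NNReal.coe_le_coe, coe_nnnorm, coe_nnnorm, hunit]) hcont
  have hC : IsCompact (closure (S '' closedBall 0 1)) :=
    (isCompactOperator_of_finiteDimensional_range S).isCompact_closure_image_closedBall 1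
  have hint : ∀ ξ, Integrable (fun g => α g (S (α g⁻¹ ξ))) (Measure.haar : Measure G) :=
    fun ξ => Continuous.integrable_of_hasCompactSupport
      (hact.comp (continuous_id.prodMk (S.continuous.comp ((hcont ξ).comp continuous_inv))))
      (.of_compactSpace _)
  refine isCompactOperator_of_integral_mem (closedBall_mem_nhds 0 one_pos)
    ((isCompact_univ.prod hC).image hact) (fun ξ hξ g => ⟨(g, S (α g⁻¹ ξ)), ⟨mem_univ g, ?_⟩, rfl⟩)
    hint (fun ξ => eq_integral_of_forall_inner_eq (hint ξ) (hT ξ))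
  exact subset_closure (mem_image_of_mem S (by simpa [hunit] using hξ))

/-- Averaging a finite-rank operator over a strongly continuous unitary representation of a
compact group (weak integral against Haar measure) yields a compact operator. -/
theorem stmt_6 {G : Type*} [Group G] [TopologicalSpace G] [IsTopologicalGroup G]
    [CompactSpace G] [T2Space G] [MeasurableSpace G] [BorelSpace G]
    {H : Type*} [NormedAddCommGroup H] [InnerProductSpace ℂ H] [CompleteSpace H]
    (α : G →* (H →L[ℂ] H))
    (hunit : ∀ (g : G) (ξ : H), ‖α g ξ‖ = ‖ξ‖)
    (hcont : ∀ ξ : H, Continuous fun g => α g ξ)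
    (S : H →L[ℂ] H) (hS : FiniteDimensional ℂ (LinearMap.range (S : H →ₗ[ℂ] H)))
    (T : H →L[ℂ] H)
    (hT : ∀ ξ η : H, (inner ℂ (T ξ) η : ℂ) =
      ∫ g, (inner ℂ (α g (S (α g⁻¹ ξ))) η : ℂ) ∂(Measure.haar : Measure G)) :
    IsCompactOperator T :=
  stmt_6_general α hunit hcont S hS T hT
end

section
/- Let G be a compact group, let (A_n)_{n≥1} be an increasing sequence of closed G-invariant subspaces of L²(G) whose union is dense, with the constant functions contained in each A_n. Suppose ξ ∈ L²(G) has ‖ξ‖ = 1, ⟨ξ, 1⟩ = 0, and Σ_{g∈F}‖λ_g ξ − ξ‖² < δ² for some finite F and δ < 1/2. Then there exist n and η ∈ A_n with ‖η‖ = 1, ⟨η, 1⟩ = 0 and Σ_{g∈F}‖λ_g η − η‖² < (δ/(1−δ))² ≤ (2δ)². -/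
/-!
Project `ξ` onto a subspace `A n` containing a vector within `δ` of `ξ`. Since `A n` is invariant
under the unitary operators `λ_g`, the projection `P` commutes with them, so
`λ_g (Pξ) - Pξ = P (λ_g ξ - ξ)` is no longer than `λ_g ξ - ξ`; since `ξ₀ ∈ A n` and `P` is
self-adjoint, `⟪ξ₀, Pξ⟫ = ⟪ξ₀, ξ⟫ = 0`. Finally `‖Pξ‖ > 1 - δ`, so normalizing `Pξ` multiplies
the sum of squared displacements by less than `(1 - δ)⁻²`.
-/

open Finset

section

variable {𝕜 : Type*} [RCLike 𝕜] {G : Type*} [Group G]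
  {H : Type*} [NormedAddCommGroup H] [InnerProductSpace 𝕜 H]

namespace Submodule

theorem norm_sub_starProjection_le (K : Submodule 𝕜 H) [K.HasOrthogonalProjection] {x : H}
    (hx : x ∈ K) (y : H) : ‖y - K.starProjection y‖ ≤ ‖y - x‖ := by
  rw [starProjection_minimal]
  exact ciInf_le ⟨0, Set.forall_mem_range.2 fun _ => norm_nonneg _⟩ (⟨x, hx⟩ : K)

theorem starProjection_apply_of_invariant (lam : G →* (H →L[𝕜] H))
    (hunit : ∀ (g : G) (x : H), ‖lam g x‖ = ‖x‖) (K : Submodule 𝕜 H) [K.HasOrthogonalProjection]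
    (hK : ∀ (g : G), ∀ x ∈ K, lam g x ∈ K) (g : G) (x : H) :
    K.starProjection (lam g x) = lam g (K.starProjection x) := by
  refine eq_starProjection_of_mem_of_inner_eq_zero (hK g _ (starProjection_apply_mem K x))
    fun w hw => ?_
  have hw_eq : lam g (lam g⁻¹ w) = w := by
    rw [← mul_apply_eq_comp, ← map_mul, mul_inv_cancel, map_one, one_apply_eq_self]
  calc inner 𝕜 (lam g x - lam g (K.starProjection x)) w
      = inner 𝕜 (lam g (x - K.starProjection x)) (lam g (lam g⁻¹ w)) := by rw [map_sub, hw_eq]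
    _ = inner 𝕜 (x - K.starProjection x) (lam g⁻¹ w) :=
        LinearIsometry.inner_map_map ⟨(lam g).toLinearMap, hunit g⟩ _ _
    _ = 0 := starProjection_inner_eq_zero x _ (hK g⁻¹ w hw)

end Submodule

def invarianceDefect (lam : G →* (H →L[𝕜] H)) (F : Finset G) (ξ : H) : ℝ :=
  ∑ g ∈ F, ‖lam g ξ - ξ‖ ^ 2

theorem invarianceDefect_smul (lam : G →* (H →L[𝕜] H)) (F : Finset G) (c : 𝕜) (ξ : H) :
    invarianceDefect lam F (c • ξ) = ‖c‖ ^ 2 * invarianceDefect lam F ξ := by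
  simp only [invarianceDefect, mul_sum, map_smul, ← smul_sub, norm_smul, mul_pow]

theorem invarianceDefect_starProjection_le (lam : G →* (H →L[𝕜] H))
    (hunit : ∀ (g : G) (x : H), ‖lam g x‖ = ‖x‖) (K : Submodule 𝕜 H) [K.HasOrthogonalProjection]
    (hK : ∀ (g : G), ∀ x ∈ K, lam g x ∈ K) (F : Finset G) (ξ : H) :
    invarianceDefect lam F (K.starProjection ξ) ≤ invarianceDefect lam F ξ := by
  refine sum_le_sum fun g _ => pow_le_pow_left₀ (norm_nonneg _) ?_ 2
  rw [← K.starProjection_apply_of_invariant lam hunit hK, ← map_sub]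
  exact K.norm_starProjection_apply_le _

theorem sq_div_one_sub_le_sq_two_mul {δ : ℝ} (hδ0 : 0 ≤ δ) (hδ : δ ≤ 1 / 2) :
    (δ / (1 - δ)) ^ 2 ≤ (2 * δ) ^ 2 := by
  have h1δ : 0 < 1 - δ := by linarith
  refine pow_le_pow_left₀ (div_nonneg hδ0 h1δ.le) ?_ 2
  rw [div_le_iff₀ h1δ]
  nlinarith

end

theorem stmt_12_general {G : Type*} [Group G]
    {H : Type*} [NormedAddCommGroup H] [InnerProductSpace ℂ H] [CompleteSpace H]
    (lam : G →* (H →L[ℂ] H)) (hunit : ∀ (g : G) (ξ : H), ‖lam g ξ‖ = ‖ξ‖)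
    (ξ₀ : H)
    (A : ℕ → Submodule ℂ H) (hclosed : ∀ n, IsClosed (A n : Set H))
    (hinvA : ∀ (n : ℕ) (g : G), ∀ x ∈ A n, lam g x ∈ A n)
    (hconst : ∀ n, ξ₀ ∈ A n) (hdense : Dense (⋃ n, (A n : Set H)))
    (ξ : H) (hξ : ‖ξ‖ = 1) (hperp : (inner ℂ ξ₀ ξ : ℂ) = 0)
    (F : Finset G) (δ : ℝ) (hδ0 : 0 < δ) (hδ : δ < 1 / 2)
    (hsum : ∑ g ∈ F, ‖lam g ξ - ξ‖ ^ 2 < δ ^ 2) :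
    ∃ n : ℕ, ∃ η ∈ A n, ‖η‖ = 1 ∧ (inner ℂ ξ₀ η : ℂ) = 0 ∧
      ∑ g ∈ F, ‖lam g η - η‖ ^ 2 < (δ / (1 - δ)) ^ 2 ∧
      (δ / (1 - δ)) ^ 2 ≤ (2 * δ) ^ 2 := by
  obtain ⟨x, hx, hξx⟩ := Metric.mem_closure_iff.1 (hdense ξ) δ hδ0
  obtain ⟨n, hxA⟩ := Set.mem_iUnion.1 hx
  have : CompleteSpace (A n) := (hclosed n).completeSpace_coe
  set ζ := (A n).starProjection ξ
  have hξζ : ‖ξ - ζ‖ < δ :=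
    ((A n).norm_sub_starProjection_le hxA ξ).trans_lt (dist_eq_norm ξ x ▸ hξx)
  have hζ : 1 - δ < ‖ζ‖ := by linarith [norm_sub_norm_le ξ ζ]
  have hζ0 : 0 < ‖ζ‖ := by linarith
  refine ⟨n, (‖ζ‖⁻¹ : ℂ) • ζ, Submodule.smul_mem _ _ ((A n).starProjection_apply_mem ξ),
    norm_smul_inv_norm (norm_pos_iff.1 hζ0), ?_, ?_, sq_div_one_sub_le_sq_two_mul hδ0.le hδ.le⟩
  · rw [inner_smul_right, ← (A n).inner_starProjection_left_eq_right,
      (A n).starProjection_eq_self_iff.2 (hconst n), hperp, mul_zero]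
  · calc invarianceDefect lam F ((‖ζ‖⁻¹ : ℂ) • ζ)
        = invarianceDefect lam F ζ / ‖ζ‖ ^ 2 := by
          rw [invarianceDefect_smul, norm_inv, Complex.norm_real, norm_norm, inv_pow,
            inv_mul_eq_div]
      _ ≤ invarianceDefect lam F ξ / ‖ζ‖ ^ 2 := by
          gcongr
          exact invarianceDefect_starProjection_le lam hunit (A n) (hinvA n) F ξ
      _ < δ ^ 2 / (1 - δ) ^ 2 := by
          refine div_lt_div₀ hsum ?_ (by positivity) (by nlinarith)
          exact pow_le_pow_left₀ (by linarith) hζ.le 2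
      _ = (δ / (1 - δ)) ^ 2 := (div_pow _ _ _).symm

/-- Approximation step of Lemmas 2.5 and 2.6: an almost-invariant unit vector orthogonal to
the invariant vector `ξ₀` can be replaced by one lying in a member of an increasing dense
sequence of closed invariant subspaces, with controlled loss. -/
theorem stmt_12 {G : Type*} [Group G]
    {H : Type*} [NormedAddCommGroup H] [InnerProductSpace ℂ H] [CompleteSpace H]
    (lam : G →* (H →L[ℂ] H)) (hunit : ∀ (g : G) (ξ : H), ‖lam g ξ‖ = ‖ξ‖)
    (ξ₀ : H) (hξ₀ : ‖ξ₀‖ = 1) (hfix : ∀ g : G, lam g ξ₀ = ξ₀)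
    (A : ℕ → Submodule ℂ H) (hclosed : ∀ n, IsClosed (A n : Set H))
    (hinvA : ∀ (n : ℕ) (g : G), ∀ x ∈ A n, lam g x ∈ A n) (hmono : Monotone A)
    (hconst : ∀ n, ξ₀ ∈ A n) (hdense : Dense (⋃ n, (A n : Set H)))
    (ξ : H) (hξ : ‖ξ‖ = 1) (hperp : (inner ℂ ξ₀ ξ : ℂ) = 0)
    (F : Finset G) (δ : ℝ) (hδ0 : 0 < δ) (hδ : δ < 1 / 2)
    (hsum : ∑ g ∈ F, ‖lam g ξ - ξ‖ ^ 2 < δ ^ 2) :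
    ∃ n : ℕ, ∃ η ∈ A n, ‖η‖ = 1 ∧ (inner ℂ ξ₀ η : ℂ) = 0 ∧
      ∑ g ∈ F, ‖lam g η - η‖ ^ 2 < (δ / (1 - δ)) ^ 2 ∧
      (δ / (1 - δ)) ^ 2 ≤ (2 * δ) ^ 2 :=
  stmt_12_general lam hunit ξ₀ A hclosed hinvA hconst hdense ξ hξ hperp F δ hδ0 hδ hsum
end
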